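/- Let X be a permutation matrix with zero diagonal on n ≥ 3 nodes, X⁽²⁾ = X·X, and suppose β⁽²⁾ I_n + α⁽²⁾ J_n − (1/2)((X + X⁽²⁾) + (X + X⁽²⁾)ᵀ) ⪰ 0 with β⁽²⁾ < 2. Then X is the adjacency matrix of a directed Hamiltonian cycle. -/

import Mathlib

/-!
If `σ` is not a single cycle, pick a cycle `C` of `σ` and a point outside it. The vector
`v = n • 𝟙_C - |C| • 𝟙` is nonzero, sums to zero (so `J v = 0`) and is constant on the
cycles of `σ` (so `X v = Xᵀ v = v`). Hence `v` is an eigenvector of the certificate matrix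
with eigenvalue `β⁽²⁾ - 2 < 0`, contradicting positive semidefiniteness.
-/

open Matrix

lemma Equiv.Perm.exists_not_sameCycle_of_not_isCycle {α : Type*} {σ : Equiv.Perm α}
    (hσ : ¬σ.IsCycle) {i : α} (hi : σ i ≠ i) : ∃ y, ¬σ.SameCycle i y := by
  by_contra! h
  exact hσ ⟨i, hi, fun y _ => h y⟩

lemma eq_permMatrix_of_apply {ι : Type*} [DecidableEq ι] {σ : Equiv.Perm ι} {X : Matrix ι ι ℝ}
    (hX : ∀ i j, X i j = if σ i = j then 1 else 0) : X = σ.permMatrix ℝ := by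
  ext i j; simp [hX, PEquiv.toMatrix_apply]

variable {ι : Type*} [Fintype ι]

lemma Matrix.PosSemidef.nonneg_of_mulVec_eq_smul {M : Matrix ι ι ℝ} (hM : M.PosSemidef)
    {v : ι → ℝ} (hv : v ≠ 0) {μ : ℝ} (h : M *ᵥ v = μ • v) : 0 ≤ μ := by
  have hq := hM.dotProduct_mulVec_nonneg v
  rw [h, dotProduct_smul, smul_eq_mul] at hq
  exact nonneg_of_mul_nonneg_left hq (dotProduct_star_self_pos_iff.2 hv)

lemma Matrix.of_const_one_mulVec (v : ι → ℝ) :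
    (of fun _ _ => (1 : ℝ) : Matrix ι ι ℝ) *ᵥ v = fun _ => ∑ j, v j := by
  ext; simp [mulVec, dotProduct]

lemma certificate_mulVec_eq_smul [DecidableEq ι] (X : Matrix ι ι ℝ) (α β : ℝ) {v : ι → ℝ}
    (hXv : X *ᵥ v = v) (hXtv : Xᵀ *ᵥ v = v) (hsum : ∑ j, v j = 0) :
    (β • (1 : Matrix ι ι ℝ) + α • (of fun _ _ => (1 : ℝ))
      - (1 / 2 : ℝ) • ((X + X * X) + (X + X * X)ᵀ)) *ᵥ v = (β - 2) • v := by
  have hXXv : (X * X) *ᵥ v = v := by rw [← mulVec_mulVec, hXv, hXv]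
  have hXXtv : (X * X)ᵀ *ᵥ v = v := by rw [transpose_mul, ← mulVec_mulVec, hXtv, hXtv]
  simp only [sub_mulVec, add_mulVec, smul_mulVec, one_mulVec, transpose_add, of_const_one_mulVec,
    hsum, hXv, hXXv, hXtv, hXXtv]
  ext; simp only [Pi.add_apply, Pi.sub_apply, Pi.smul_apply, smul_eq_mul]; ring

lemma Equiv.Perm.exists_invariant_sum_zero_of_not_sameCycle (σ : Equiv.Perm ι) {i y : ι}
    (hy : ¬σ.SameCycle i y) : ∃ v : ι → ℝ, v ∘ σ = v ∧ ∑ j, v j = 0 ∧ v ≠ 0 := by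
  classical
  set k := (Finset.univ.filter (σ.SameCycle i)).card
  refine ⟨fun j => Fintype.card ι * (if σ.SameCycle i j then 1 else 0) - k, ?_, ?_, ?_⟩
  · ext j; simp [Equiv.Perm.sameCycle_apply_right]
  · rw [Finset.sum_sub_distrib, ← Finset.mul_sum, Finset.sum_boole, Finset.sum_const,
      Finset.card_univ, nsmul_eq_mul, sub_self]
  · have hk : 0 < k := Finset.card_pos.2 ⟨i, Finset.mem_filter.2 ⟨Finset.mem_univ i, .refl σ i⟩⟩
    intro h
    have hvy := congrFun h y
    simp only [hy, if_false, mul_zero, zero_sub, Pi.zero_apply, neg_eq_zero, Nat.cast_eq_zero]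
      at hvy
    omega

theorem distance_two_psd_certificate_implies_hamiltonian {n : ℕ} (hn : 3 ≤ n)
    (σ : Equiv.Perm (Fin n)) (hfix : ∀ i, σ i ≠ i)
    (X : Matrix (Fin n) (Fin n) ℝ)
    (hX : ∀ i j, X i j = if σ i = j then 1 else 0)
    (α2 β2 : ℝ) (hβ2 : β2 < 2)
    (hpsd : (β2 • (1 : Matrix (Fin n) (Fin n) ℝ)
      + α2 • (Matrix.of fun _ _ => (1 : ℝ))
      - (1 / 2 : ℝ) • ((X + X * X) + (X + X * X)ᵀ)).PosSemidef) :
    σ.IsCycle ∧ σ.support = Finset.univ := by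
  refine ⟨?_, Finset.eq_univ_of_forall fun i => Equiv.Perm.mem_support.2 (hfix i)⟩
  by_contra hcyc
  obtain ⟨y, hy⟩ := Equiv.Perm.exists_not_sameCycle_of_not_isCycle hcyc (hfix ⟨0, by omega⟩)
  obtain ⟨v, hvσ, hsum, hv⟩ := σ.exists_invariant_sum_zero_of_not_sameCycle hy
  have hXv : X *ᵥ v = v := by rw [eq_permMatrix_of_apply hX, permMatrix_mulVec, hvσ]
  have hXtv : Xᵀ *ᵥ v = v := by
    rw [mulVec_transpose, eq_permMatrix_of_apply hX, vecMul_permMatrix,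
      (Equiv.comp_symm_eq σ v v).2 hvσ.symm]
  have := hpsd.nonneg_of_mulVec_eq_smul hv (certificate_mulVec_eq_smul X α2 β2 hXv hXtv hsum)
  linarith
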